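/- q-Ehrhart series of the unit cube and MacMahon's identity: for a nonnegative integer n, ∑_{π ∈ S_n} t^{des(π)} q^{maj(π)} = (t;q)_{n+1} · ∑_{m≥0} t^m (1+q+⋯+q^m)^n; equivalently, ∑_{m≥0} t^m E_q([0,1]^n, m) = (t;q)_{n+1}^{-1} ∑_{π∈S_n} t^{des(π)} q^{maj(π)}, where E_q([0,1]^n, m) = ∑_{(x₁,…,x_n)∈{0,…,m}^n} q^{x₁+⋯+x_n} = ([m+1]_q)^n. -/

import Mathlib

/-- The value `π(i)` (0-indexed) of a permutation of `Fin n`, extended by `0` outside range. -/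
def permVal {n : ℕ} (π : Equiv.Perm (Fin n)) (i : ℕ) : ℕ :=
  if h : i < n then (π ⟨i, h⟩ : ℕ) else 0

/-- The (0-indexed) descent set of a permutation: positions `i < n-1` with `π(i) > π(i+1)`. -/
def desSet {n : ℕ} (π : Equiv.Perm (Fin n)) : Finset ℕ :=
  (Finset.range (n - 1)).filter fun i => permVal π (i + 1) < permVal π i

/-- The descent number `des(π)`. -/
def desNum {n : ℕ} (π : Equiv.Perm (Fin n)) : ℕ := (desSet π).card

/-- The major index `maj(π)`: the sum of the (1-indexed) descent positions. -/
def maj {n : ℕ} (π : Equiv.Perm (Fin n)) : ℕ := ∑ i ∈ desSet π, (i + 1)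

/-- The `q`-Pochhammer symbol `(a;q)_n = ∏_{k=0}^{n-1} (1 - a q^k)`. -/
noncomputable def qPoch (q a : ℝ) (n : ℕ) : ℝ := ∏ k ∈ Finset.range n, (1 - a * q ^ k)

/-- The `q`-integer `[m]_q = (1-q^m)/(1-q)`. -/
noncomputable def qNum (q : ℝ) (m : ℕ) : ℝ := (1 - q ^ m) / (1 - q)

/-- The `q`-factorial `[n]_q! = [1]_q [2]_q ⋯ [n]_q`. -/
noncomputable def qFact (q : ℝ) (n : ℕ) : ℝ := ∏ k ∈ Finset.range n, qNum q (k + 1)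

open Finset

namespace MacMahonAux

variable {n : ℕ}

lemma desSet_lt {π : Equiv.Perm (Fin n)} {d : ℕ} (hd : d ∈ desSet π) : d + 1 < n := by
  simp only [desSet, mem_filter, mem_range] at hd
  omega

def DD (π : Equiv.Perm (Fin n)) (i : ℕ) : ℕ := ((desSet π).filter fun d => i ≤ d).card

lemma DD_zero (π : Equiv.Perm (Fin n)) : DD π 0 = desNum π := by
  unfold DD desNum
  congr 1
  exact filter_true_of_mem (fun d _ => Nat.zero_le d)

lemma DD_succ (π : Equiv.Perm (Fin n)) (i : ℕ) :
    DD π i = DD π (i + 1) + (if i ∈ desSet π then 1 else 0) := by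
  classical
  unfold DD
  rw [card_filter, card_filter, ← Finset.sum_ite_eq' (desSet π) i (fun _ => 1),
    ← sum_add_distrib]
  apply sum_congr rfl
  intro d _
  split_ifs <;> omega

lemma DD_eq_zero (π : Equiv.Perm (Fin n)) {i : ℕ} (h : n - 1 ≤ i) : DD π i = 0 := by
  unfold DD
  rw [filter_false_of_mem, card_empty]
  intro d hd
  have := desSet_lt hd
  omega

lemma DD_le (π : Equiv.Perm (Fin n)) (i : ℕ) : DD π i ≤ desNum π :=
  card_le_card (filter_subset _ _)

lemma maj_eq (π : Equiv.Perm (Fin n)) : maj π = ∑ i ∈ range n, DD π i := by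
  unfold maj DD
  simp only [card_filter]
  rw [Finset.sum_comm]
  apply sum_congr rfl
  intro d hd
  have hdn := desSet_lt hd
  rw [← Finset.sum_filter]
  have h1 : (range n).filter (fun i => i ≤ d) = range (d + 1) := by
    ext x
    simp only [mem_filter, mem_range]
    omega
  rw [h1, Finset.sum_const, card_range, smul_eq_mul, mul_one]

def g0 (π : Equiv.Perm (Fin n)) (l : ℕ →₀ ℕ) (i : ℕ) : ℕ :=
  DD π i + ∑ j ∈ Ico (i + 1) (n + 1), l j

lemma g0_succ (π : Equiv.Perm (Fin n)) (l : ℕ →₀ ℕ) {i : ℕ} (h : i < n) :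
    g0 π l i = g0 π l (i + 1) + ((if i ∈ desSet π then 1 else 0) + l (i + 1)) := by
  unfold g0
  rw [DD_succ π i, Finset.sum_eq_sum_Ico_succ_bot (by omega : i + 1 < n + 1)]
  ring

lemma g0_of_le (π : Equiv.Perm (Fin n)) (l : ℕ →₀ ℕ) {i : ℕ} (h : n ≤ i) : g0 π l i = 0 := by
  unfold g0
  rw [DD_eq_zero π (by omega), Ico_eq_empty (by omega), sum_empty]
  rfl

lemma g0_anti (π : Equiv.Perm (Fin n)) (l : ℕ →₀ ℕ) : Antitone (g0 π l) := by
  apply antitone_nat_of_succ_le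
  intro i
  rcases Nat.lt_or_ge i n with h | h
  · rw [g0_succ π l h]; omega
  · rw [g0_of_le π l (by omega : n ≤ i + 1)]; exact Nat.zero_le _

lemma g0_le (π : Equiv.Perm (Fin n)) (l : ℕ →₀ ℕ) {m : ℕ} (hdm : desNum π ≤ m)
    (hl : ∑ j ∈ range (n + 1), l j = m - desNum π) (i : ℕ) : g0 π l i ≤ m := by
  have h0 : g0 π l 0 ≤ m := by
    unfold g0
    rw [DD_zero, show (0:ℕ) + 1 = 1 from rfl]
    have h1 : l 0 + ∑ j ∈ Ico 1 (n + 1), l j = m - desNum π := by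
      rw [← hl, range_eq_Ico, Finset.sum_eq_sum_Ico_succ_bot (by omega : 0 < n + 1)]
    omega
  exact le_trans (g0_anti π l (Nat.zero_le i)) h0

lemma sum_g0 (π : Equiv.Perm (Fin n)) (l : ℕ →₀ ℕ) :
    ∑ i ∈ range n, g0 π l i = maj π + ∑ j ∈ range (n + 1), j * l j := by
  unfold g0
  rw [sum_add_distrib, ← maj_eq]
  congr 1
  have h1 : ∀ i ∈ range n, ∑ j ∈ Ico (i + 1) (n + 1), l j
      = ∑ j ∈ range (n + 1), if i < j then l j else 0 := by
    intro i _
    rw [← Finset.sum_filter]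
    congr 1
    ext x
    simp only [mem_filter, mem_Ico, mem_range]
    omega
  rw [sum_congr rfl h1, Finset.sum_comm]
  apply sum_congr rfl
  intro j hj
  rw [← Finset.sum_filter]
  have hj' : j < n + 1 := mem_range.mp hj
  have h2 : (range n).filter (fun i => i < j) = range j := by
    ext x
    simp only [mem_filter, mem_range]
    omega
  rw [h2, Finset.sum_const, card_range, smul_eq_mul]


def Phi (m : ℕ) (π : Equiv.Perm (Fin n)) (l : ℕ →₀ ℕ) : Fin n → Fin (m + 1) :=
  fun p => ⟨min (g0 π l ((π.symm p : ℕ))) m, Nat.lt_succ_of_le (min_le_right _ _)⟩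

def sigv (m : ℕ) (v : Fin n → Fin (m + 1)) : Equiv.Perm (Fin n) :=
  Tuple.sort (fun p => m - (v p : ℕ))

def gv (m : ℕ) (v : Fin n → Fin (m + 1)) (i : ℕ) : ℕ :=
  if h : i < n then (v (sigv m v ⟨i, h⟩) : ℕ) else 0

def Av (m : ℕ) (v : Fin n → Fin (m + 1)) (i : ℕ) : ℕ :=
  if i < n then gv m v i - DD (sigv m v) i else 0

def lvf (m : ℕ) (v : Fin n → Fin (m + 1)) (j : ℕ) : ℕ :=
  if j = 0 then (m - desNum (sigv m v)) - Av m v 0 else Av m v (j - 1) - Av m v j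

lemma lvf_support (m : ℕ) (v : Fin n → Fin (m + 1)) : ∀ j, lvf m v j ≠ 0 → j ∈ range (n + 1) := by
  intro j hj
  simp only [mem_range]
  by_contra h
  push_neg at h
  apply hj
  simp only [lvf, Av, if_neg (show ¬ j = 0 by omega), if_neg (show ¬ j - 1 < n by omega),
    if_neg (show ¬ j < n by omega)]

noncomputable def lv (m : ℕ) (v : Fin n → Fin (m + 1)) : ℕ →₀ ℕ :=
  Finsupp.onFinset (range (n + 1)) (lvf m v) (lvf_support m v)

variable {m : ℕ}

lemma gv_le (v : Fin n → Fin (m + 1)) (i : ℕ) : gv m v i ≤ m := by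
  unfold gv
  split
  · exact Nat.lt_succ_iff.mp (Fin.is_lt _)
  · exact Nat.zero_le _

lemma gv_anti (v : Fin n → Fin (m + 1)) {i i' : ℕ} (h : i ≤ i') : gv m v i' ≤ gv m v i := by
  unfold gv
  rcases Nat.lt_or_ge i' n with h' | h'
  · have hi : i < n := lt_of_le_of_lt h h'
    rw [dif_pos h', dif_pos hi]
    have hmono := Tuple.monotone_sort (fun p => m - (v p : ℕ))
      (show (⟨i, hi⟩ : Fin n) ≤ ⟨i', h'⟩ from Fin.mk_le_mk.mpr h)
    simp only [Function.comp_apply] at hmono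
    have b1 : (v (Tuple.sort (fun p => m - (v p : ℕ)) ⟨i, hi⟩) : ℕ) ≤ m :=
      Nat.lt_succ_iff.mp (Fin.is_lt _)
    have b2 : (v (Tuple.sort (fun p => m - (v p : ℕ)) ⟨i', h'⟩) : ℕ) ≤ m :=
      Nat.lt_succ_iff.mp (Fin.is_lt _)
    show (v (sigv m v ⟨i', h'⟩) : ℕ) ≤ (v (sigv m v ⟨i, hi⟩) : ℕ)
    unfold sigv
    omega
  · rw [dif_neg (by omega)]
    exact Nat.zero_le _

lemma mem_desSet {π : Equiv.Perm (Fin n)} {i : ℕ} :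
    i ∈ desSet π ↔ i + 1 < n ∧ permVal π (i + 1) < permVal π i := by
  simp only [desSet, mem_filter, mem_range]
  omega

lemma gv_desc (v : Fin n → Fin (m + 1)) {i : ℕ} (hi : i ∈ desSet (sigv m v)) :
    gv m v (i + 1) < gv m v i := by
  obtain ⟨h1, h2⟩ := mem_desSet.mp hi
  have hin : i < n := by omega
  unfold permVal at h2
  rw [dif_pos h1, dif_pos hin] at h2
  have hanti := gv_anti v (show i ≤ i + 1 by omega)
  rcases lt_or_eq_of_le hanti with h | h
  · exact h
  · exfalso
    unfold gv at h
    rw [dif_pos h1, dif_pos hin] at h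
    have hties := (Tuple.eq_sort_iff.mp (rfl : sigv m v = Tuple.sort (fun p => m - (v p : ℕ)))).2
    have := hties ⟨i, hin⟩ ⟨i + 1, h1⟩ (Fin.mk_lt_mk.mpr (Nat.lt_succ_self i))
      (by show m - _ = m - _; omega)
    have : ((sigv m v) ⟨i, hin⟩ : ℕ) < ((sigv m v) ⟨i + 1, h1⟩ : ℕ) := this
    omega

lemma gv_ge_DD_aux (v : Fin n → Fin (m + 1)) : ∀ k i, n - i ≤ k → DD (sigv m v) i ≤ gv m v i := by
  intro k
  induction k with
  | zero =>
    intro i hi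
    rw [DD_eq_zero _ (by omega)]
    exact Nat.zero_le _
  | succ k IH =>
    intro i hi
    rcases Nat.lt_or_ge i (n - 1) with h | h
    · have h1 := DD_succ (sigv m v) i
      have h2 := IH (i + 1) (by omega)
      by_cases hd : i ∈ desSet (sigv m v)
      · have h3 := gv_desc v hd
        rw [if_pos hd] at h1
        omega
      · have h3 := gv_anti v (show i ≤ i + 1 by omega)
        rw [if_neg hd] at h1
        omega
    · rw [DD_eq_zero _ h]
      exact Nat.zero_le _

lemma gv_ge_DD (v : Fin n → Fin (m + 1)) (i : ℕ) : DD (sigv m v) i ≤ gv m v i :=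
  gv_ge_DD_aux v (n - i) i le_rfl

lemma Av_succ_le (v : Fin n → Fin (m + 1)) (i : ℕ) : Av m v (i + 1) ≤ Av m v i := by
  have h1 := gv_ge_DD v (i + 1)
  have h2 := gv_ge_DD v i
  have hD := DD_succ (sigv m v) i
  have ha := gv_anti v (show i ≤ i + 1 by omega)
  unfold Av
  by_cases hd : i ∈ desSet (sigv m v)
  · have h3 := gv_desc v hd
    rw [if_pos hd] at hD
    split_ifs <;> omega
  · rw [if_neg hd] at hD
    split_ifs <;> omega

lemma tele (A : ℕ → ℕ) (hA : ∀ i, A (i + 1) ≤ A i) :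
    ∀ {a b : ℕ}, a ≤ b → ∑ j ∈ Ico a b, (A j - A (j + 1)) = A a - A b := by
  have hA' : Antitone A := antitone_nat_of_succ_le hA
  intro a b hab
  induction b, hab using Nat.le_induction with
  | base => simp
  | succ b hab IH =>
    rw [Finset.sum_Ico_succ_top hab, IH]
    have t1 := hA' hab
    have t2 := hA b
    omega

lemma Av_n (v : Fin n → Fin (m + 1)) : Av m v n = 0 := by
  unfold Av
  rw [if_neg (lt_irrefl n)]

lemma sum_lv_Ico (v : Fin n → Fin (m + 1)) (i : ℕ) (hi : i ≤ n) :
    ∑ j ∈ Ico (i + 1) (n + 1), lv m v j = Av m v i := by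
  have h1 : ∀ j ∈ Ico (i + 1) (n + 1), lv m v j = Av m v (j - 1) - Av m v j := by
    intro j hj
    simp only [mem_Ico] at hj
    show lvf m v j = _
    unfold lvf
    rw [if_neg (by omega)]
  rw [sum_congr rfl h1, Finset.sum_Ico_eq_sum_range]
  have h2 : ∀ k ∈ range (n + 1 - (i + 1)), Av m v (i + 1 + k - 1) - Av m v (i + 1 + k)
      = Av m v (i + k) - Av m v (i + k + 1) := by
    intro k _
    rw [show i + 1 + k - 1 = i + k from by omega, show i + 1 + k = i + k + 1 from by omega]
  rw [sum_congr rfl h2, show n + 1 - (i + 1) = n - i from by omega,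
    ← Finset.sum_Ico_eq_sum_range (fun j => Av m v j - Av m v (j + 1)) i n,
    tele (Av m v) (Av_succ_le v) hi, Av_n]
  omega

lemma Av0_le (v : Fin n → Fin (m + 1)) : Av m v 0 ≤ m - desNum (sigv m v) := by
  unfold Av
  split_ifs with h
  · rw [DD_zero]
    have h1 := gv_ge_DD v 0
    have h2 := gv_le v 0
    rw [DD_zero] at h1
    omega
  · exact Nat.zero_le _

lemma desNum_le (v : Fin n → Fin (m + 1)) : desNum (sigv m v) ≤ m := by
  cases n with
  | zero =>
    have : desSet (sigv m v) = ∅ := by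
      unfold desSet
      simp
    simp [desNum, this]
  | succ N =>
    have h1 := gv_ge_DD v 0
    have h2 := gv_le v 0
    rw [DD_zero] at h1
    omega

lemma sum_lv (v : Fin n → Fin (m + 1)) :
    ∑ j ∈ range (n + 1), lv m v j = m - desNum (sigv m v) := by
  rw [range_eq_Ico, Finset.sum_eq_sum_Ico_succ_bot (Nat.succ_pos n),
    show (0:ℕ) + 1 = 1 from rfl, sum_lv_Ico v 0 (Nat.zero_le n)]
  have h1 : lv m v 0 = (m - desNum (sigv m v)) - Av m v 0 := rfl
  have h2 := Av0_le v
  rw [h1]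
  omega


lemma Phi_Psi (v : Fin n → Fin (m + 1)) : Phi m (sigv m v) (lv m v) = v := by
  funext p
  apply Fin.ext
  show min (g0 (sigv m v) (lv m v) (((sigv m v).symm p : ℕ))) m = (v p : ℕ)
  have hlt := ((sigv m v).symm p).is_lt
  have hg0 : g0 (sigv m v) (lv m v) (((sigv m v).symm p : ℕ)) = gv m v (((sigv m v).symm p : ℕ)) := by
    unfold g0
    rw [sum_lv_Ico v _ (le_of_lt hlt)]
    have h1 := gv_ge_DD v (((sigv m v).symm p : ℕ))
    unfold Av
    rw [if_pos hlt]
    omega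
  rw [hg0, min_eq_left (gv_le v _)]
  unfold gv
  rw [dif_pos hlt]
  congr
  rw [Fin.eta, Equiv.apply_symm_apply]

lemma Phi_val (π : Equiv.Perm (Fin n)) (l : ℕ →₀ ℕ) (hdm : desNum π ≤ m)
    (hl : ∑ j ∈ range (n + 1), l j = m - desNum π) (p : Fin n) :
    (Phi m π l p : ℕ) = g0 π l ((π.symm p : ℕ)) :=
  min_eq_left (g0_le π l hdm hl _)

lemma sort_Phi (π : Equiv.Perm (Fin n)) (l : ℕ →₀ ℕ) (hdm : desNum π ≤ m)
    (hl : ∑ j ∈ range (n + 1), l j = m - desNum π) :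
    sigv m (Phi m π l) = π := by
  symm
  show π = Tuple.sort (fun p => m - ((Phi m π l p : ℕ)))
  rw [Tuple.eq_sort_iff']
  set f : Fin n → ℕ := fun p => m - ((Phi m π l p : ℕ)) with hf
  cases n with
  | zero => intro a b hab; exact absurd hab (by omega)
  | succ N =>
    rw [Fin.strictMono_iff_lt_succ]
    intro i
    simp only [Equiv.trans_apply]
    have hfval : ∀ p : Fin (N + 1), f p = m - g0 π l ((π.symm p : ℕ)) := by
      intro p
      rw [hf]
      simp only [Phi_val π l hdm hl]
    have hc1 : (π.symm (π i.castSucc) : ℕ) = (i : ℕ) := by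
      rw [Equiv.symm_apply_apply]; rfl
    have hc2 : (π.symm (π i.succ) : ℕ) = (i : ℕ) + 1 := by
      rw [Equiv.symm_apply_apply]; rfl
    have hfa : f (π i.castSucc) = m - g0 π l (i : ℕ) := by rw [hfval, hc1]
    have hfb : f (π i.succ) = m - g0 π l ((i : ℕ) + 1) := by rw [hfval, hc2]
    have hgsucc := g0_succ π l (show (i : ℕ) < N + 1 from by omega)
    have hgle := g0_le π l hdm hl (i : ℕ)
    have hgle' := g0_le π l hdm hl ((i : ℕ) + 1)
    have hlt : Tuple.graphEquiv₁ f (π i.castSucc) < Tuple.graphEquiv₁ f (π i.succ) ↔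
        f (π i.castSucc) < f (π i.succ) ∨
          (f (π i.castSucc) = f (π i.succ) ∧ π i.castSucc < π i.succ) := by
      rw [← Subtype.coe_lt_coe]
      exact Prod.Lex.lt_iff
    rw [hlt]
    by_cases hc : (if (i : ℕ) ∈ desSet π then 1 else 0) + l ((i : ℕ) + 1) = 0
    · right
      constructor
      · rw [hfa, hfb]
        omega
      · have hnd : (i : ℕ) ∉ desSet π := by
          by_contra hd
          rw [if_pos hd] at hc
          omega
        have hr : (i : ℕ) ∈ range (N + 1 - 1) := by
          simp only [mem_range]
          omega
        have hnlt : ¬ permVal π ((i : ℕ) + 1) < permVal π (i : ℕ) := by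
          intro hcon
          exact hnd (mem_filter.mpr ⟨hr, hcon⟩)
        unfold permVal at hnlt
        rw [dif_pos (show (i : ℕ) + 1 < N + 1 from by omega),
          dif_pos (show (i : ℕ) < N + 1 from by omega)] at hnlt
        have heq1 : (⟨(i : ℕ), by omega⟩ : Fin (N + 1)) = i.castSucc := rfl
        have heq2 : (⟨(i : ℕ) + 1, by omega⟩ : Fin (N + 1)) = i.succ := rfl
        rw [heq1, heq2] at hnlt
        have hne : π i.castSucc ≠ π i.succ := by
          intro hcon
          have := π.injective hcon
          have : (i.castSucc : ℕ) = (i.succ : ℕ) := by rw [this]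
          simp at this
        have : (π i.castSucc : ℕ) < (π i.succ : ℕ) := by
          rcases lt_or_eq_of_le (not_lt.mp hnlt) with h | h
          · exact h
          · exact absurd (Fin.ext h) hne
        exact this
    · left
      rw [hfa, hfb]
      omega


lemma lv_Phi (π : Equiv.Perm (Fin n)) (l : ℕ →₀ ℕ) (hdm : desNum π ≤ m)
    (hl : ∑ j ∈ range (n + 1), l j = m - desNum π)
    (hsupp : ∀ j, n + 1 ≤ j → l j = 0) : lv m (Phi m π l) = l := by
  have hs := sort_Phi π l hdm hl
  have hgv : ∀ i, i < n → gv m (Phi m π l) i = g0 π l i := by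
    intro i h
    unfold gv
    rw [dif_pos h, hs, Phi_val π l hdm hl, Equiv.symm_apply_apply]
  have hAv : ∀ i, i ≤ n → Av m (Phi m π l) i = ∑ j ∈ Ico (i + 1) (n + 1), l j := by
    intro i h
    unfold Av
    rcases Nat.lt_or_ge i n with h' | h'
    · rw [if_pos h', hgv i h', hs]
      unfold g0
      omega
    · rw [if_neg (by omega), Ico_eq_empty (by omega : ¬ i + 1 < n + 1), sum_empty]
  apply Finsupp.ext
  intro j
  show lvf m (Phi m π l) j = l j
  unfold lvf
  by_cases hj0 : j = 0
  · subst hj0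
    rw [if_pos rfl, hs, hAv 0 (Nat.zero_le n)]
    have h1 : l 0 + ∑ j ∈ Ico (0 + 1) (n + 1), l j = m - desNum π := by
      rw [← hl, range_eq_Ico, Finset.sum_eq_sum_Ico_succ_bot (by omega : 0 < n + 1)]
    omega
  · rw [if_neg hj0]
    rcases Nat.lt_or_ge j (n + 1) with hjn | hjn
    · rw [hAv (j - 1) (by omega), hAv j (by omega),
        show j - 1 + 1 = j from by omega,
        Finset.sum_eq_sum_Ico_succ_bot (show j < n + 1 from hjn)]
      have hle : ∑ x ∈ Ico (j + 1) (n + 1), l x ≤ ∑ x ∈ Ico (j + 1) (n + 1), l x := le_rfl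
      omega
    · have h1 : Av m (Phi m π l) (j - 1) = 0 := by
        unfold Av
        rw [if_neg (by omega)]
      have h2 : Av m (Phi m π l) j = 0 := by
        unfold Av
        rw [if_neg (by omega)]
      rw [h1, h2, hsupp j hjn]

lemma weight (π : Equiv.Perm (Fin n)) (l : ℕ →₀ ℕ) (hdm : desNum π ≤ m)
    (hl : ∑ j ∈ range (n + 1), l j = m - desNum π) :
    (∑ i, ((Phi m π l i : ℕ))) = maj π + ∑ j ∈ range (n + 1), j * l j := by
  calc ∑ p, ((Phi m π l p : ℕ)) = ∑ p : Fin n, g0 π l ((π.symm p : ℕ)) :=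
        sum_congr rfl (fun p _ => Phi_val π l hdm hl p)
    _ = ∑ i : Fin n, g0 π l (i : ℕ) := Equiv.sum_comp π.symm (fun i : Fin n => g0 π l (i : ℕ))
    _ = ∑ i ∈ range n, g0 π l i := Fin.sum_univ_eq_sum_range _ n
    _ = maj π + ∑ j ∈ range (n + 1), j * l j := sum_g0 π l

lemma main (n m : ℕ) (q : ℝ) :
    (∑ v : Fin n → Fin (m + 1), q ^ (∑ i, ((v i : ℕ)))) =
    ∑ π : Equiv.Perm (Fin n), (if desNum π ≤ m then
      ∑ l ∈ (range (n + 1)).finsuppAntidiag (m - desNum π),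
        q ^ (maj π + ∑ j ∈ range (n + 1), j * l j) else 0) := by
  classical
  have hB : ∀ π : Equiv.Perm (Fin n),
      (if desNum π ≤ m then
        ∑ l ∈ (range (n + 1)).finsuppAntidiag (m - desNum π),
          q ^ (maj π + ∑ j ∈ range (n + 1), j * l j) else 0)
      = ∑ l ∈ (if desNum π ≤ m then (range (n + 1)).finsuppAntidiag (m - desNum π) else ∅),
          q ^ (maj π + ∑ j ∈ range (n + 1), j * l j) := by
    intro π
    split <;> simp
  rw [Finset.sum_congr rfl (fun π _ => hB π), Finset.sum_sigma']
  symm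
  have hmem : ∀ a : (_ : Equiv.Perm (Fin n)) × (ℕ →₀ ℕ),
      a ∈ (univ : Finset (Equiv.Perm (Fin n))).sigma
        (fun π => if desNum π ≤ m then (range (n + 1)).finsuppAntidiag (m - desNum π) else ∅) →
      desNum a.1 ≤ m ∧ (∑ j ∈ range (n + 1), a.2 j = m - desNum a.1) ∧
        (∀ j, n + 1 ≤ j → a.2 j = 0) := by
    intro a ha
    rw [mem_sigma] at ha
    obtain ⟨-, ha2⟩ := ha
    by_cases hc : desNum a.1 ≤ m
    · rw [if_pos hc, mem_finsuppAntidiag] at ha2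
      refine ⟨hc, ha2.1, fun j hj => ?_⟩
      by_contra hne
      have := ha2.2 (Finsupp.mem_support_iff.mpr hne)
      rw [mem_range] at this
      omega
    · rw [if_neg hc] at ha2
      exact absurd ha2 (notMem_empty _)
  apply Finset.sum_nbij' (i := fun a => Phi m a.1 a.2) (j := fun v => ⟨sigv m v, lv m v⟩)
  · intro a _
    exact mem_univ _
  · intro v _
    rw [mem_sigma]
    refine ⟨mem_univ _, ?_⟩
    rw [if_pos (desNum_le v), mem_finsuppAntidiag]
    exact ⟨sum_lv v, Finsupp.support_onFinset_subset (hf := lvf_support m v)⟩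
  · intro a ha
    obtain ⟨h1, h2, h3⟩ := hmem a ha
    obtain ⟨π, l⟩ := a
    exact Sigma.ext (sort_Phi π l h1 h2) (heq_of_eq (lv_Phi π l h1 h2 h3))
  · intro v _
    exact Phi_Psi v
  · intro a ha
    obtain ⟨h1, h2, -⟩ := hmem a ha
    exact congrArg (q ^ ·) (weight a.1 a.2 h1 h2).symm

end MacMahonAux

open PowerSeries in
lemma geomSeries (a : ℝ) :
    (1 - PowerSeries.C a * PowerSeries.X) * PowerSeries.mk (fun k => a ^ k) = 1 := by
  ext k
  rw [sub_mul, one_mul, map_sub]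
  cases k with
  | zero => simp
  | succ k => simp [mul_assoc, PowerSeries.coeff_succ_X_mul, pow_succ']


open PowerSeries MacMahonAux in
/-- MacMahon's identity / `q`-Ehrhart series of the unit cube, as formal power series
in `t` (stated for every real `q`, since the coefficients are polynomials in `q`):
`∑_{π ∈ S_n} t^{des π} q^{maj π} = (t;q)_{n+1} ∑_{m ≥ 0} t^m E_q([0,1]^n, m)`, where
`E_q([0,1]^n, m) = ∑_{x ∈ {0,…,m}^n} q^{x₁+⋯+x_n}`, which moreover equals
`(1 + q + ⋯ + q^m)^n`. -/
theorem stmt19 (n : ℕ) (q : ℝ) :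
    ((∑ π : Equiv.Perm (Fin n), (PowerSeries.monomial (R := ℝ) (desNum π)) (q ^ maj π)) =
      (∏ j ∈ Finset.range (n + 1), (1 - PowerSeries.C (R := ℝ) (q ^ j) * PowerSeries.X)) *
        PowerSeries.mk (fun m => ∑ v : Fin n → Fin (m + 1), q ^ (∑ i, (v i : ℕ)))) ∧
    (∀ m : ℕ, (∑ v : Fin n → Fin (m + 1), q ^ (∑ i, (v i : ℕ))) =
      (∑ k ∈ Finset.range (m + 1), q ^ k) ^ n) := by
  classical
  constructor
  · set S := ∑ π : Equiv.Perm (Fin n), (monomial (desNum π)) (q ^ maj π) with hS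
    set P := ∏ j ∈ Finset.range (n + 1), (1 - C (q ^ j) * X) with hPdef
    set Q := ∏ j ∈ Finset.range (n + 1), PowerSeries.mk (fun k => (q ^ j) ^ k) with hQdef
    have hPQ : P * Q = 1 := by
      rw [hPdef, hQdef, ← Finset.prod_mul_distrib]
      exact Finset.prod_eq_one (fun j _ => geomSeries (q ^ j))
    have hcoeffQ : ∀ k, (coeff k) Q = ∑ l ∈ (range (n + 1)).finsuppAntidiag k,
        q ^ (∑ j ∈ range (n + 1), j * l j) := by
      intro k
      rw [hQdef, coeff_prod]
      apply sum_congr rfl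
      intro l _
      rw [← Finset.prod_pow_eq_pow_sum]
      apply prod_congr rfl
      intro j _
      rw [coeff_mk, ← pow_mul]
    have hQS : Q * S = PowerSeries.mk
        (fun m => ∑ v : Fin n → Fin (m + 1), q ^ (∑ i, ((v i : ℕ)))) := by
      ext m
      rw [coeff_mk, hS, Finset.mul_sum, map_sum, main n m q]
      apply Finset.sum_congr rfl
      intro π _
      have hmon : (monomial (desNum π)) (q ^ maj π) = C (q ^ maj π) * X ^ desNum π := by
        rw [X_pow_eq]
        ext k
        rw [coeff_monomial, coeff_C_mul, coeff_monomial]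
        split_ifs <;> simp
      rw [hmon, show Q * (C (q ^ maj π) * X ^ desNum π)
          = (C (q ^ maj π) * Q) * X ^ desNum π from by ring,
        PowerSeries.coeff_mul_X_pow', coeff_C_mul, hcoeffQ]
      split_ifs with h
      · rw [Finset.mul_sum]
        apply Finset.sum_congr rfl
        intro l _
        rw [← pow_add]
      · rfl
    calc S = 1 * S := (one_mul S).symm
      _ = (P * Q) * S := by rw [hPQ]
      _ = P * (Q * S) := mul_assoc _ _ _
      _ = P * PowerSeries.mk (fun m => ∑ v : Fin n → Fin (m + 1), q ^ (∑ i, ((v i : ℕ)))) := by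
          rw [hQS]
  · intro m
    rw [← Fin.sum_univ_eq_sum_range (fun k => q ^ k) (m + 1)]
    have h1 : (∑ k : Fin (m + 1), q ^ (k : ℕ)) ^ n
        = ∏ _i : Fin n, (∑ k : Fin (m + 1), q ^ (k : ℕ)) := by
      rw [Finset.prod_const, Finset.card_univ, Fintype.card_fin]
    rw [h1, Finset.prod_univ_sum (fun _ => (univ : Finset (Fin (m + 1))))
      (fun _ k => q ^ (k : ℕ)), Fintype.piFinset_univ]
    apply Finset.sum_congr rfl
    intro v _
    rw [Finset.prod_pow_eq_pow_sum]
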